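/- arXiv:2204.03212 — 5 statements merged into one kernel-verified Lean document; each statement's English description precedes it below -/
import Mathlib

section
/- If Q is the disjoint union of two quivers Q₁ and Q₂, neither of which admits a reddening sequence, then uRed(Q) ≤ |V(Q)| - 2 (and hence Red(Q) ≤ |V(Q)| - 2). -/
/-- Matrix mutation of the exchange matrix `B` at vertex `k`. -/
def mutB {V : Type*} [DecidableEq V] (k : V) (B : V → V → ℤ) : V → V → ℤ :=
  fun i j => if i = k ∨ j = k then -B i j
    else B i j + max (B i k) 0 * max (B k j) 0 - max (-B i k) 0 * max (-B k j) 0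

/-- Mutation of the frozen block `C` (rows: mutable vertices, columns: frozen vertices). -/
def mutC {V : Type*} [DecidableEq V] (k : V) (B C : V → V → ℤ) : V → V → ℤ :=
  fun i j => if i = k then -C i j
    else C i j + max (B i k) 0 * max (C k j) 0 - max (-B i k) 0 * max (-C k j) 0

/-- Mutation of an extended (framed) matrix: principal part and frozen block. -/
def mutE {V : Type*} [DecidableEq V] (k : V) (p : (V → V → ℤ) × (V → V → ℤ)) :
    (V → V → ℤ) × (V → V → ℤ) :=
  (mutB k p.1, mutC k p.1 p.2)

/-- Apply a sequence of mutations to an extended matrix. -/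
def applyE {V : Type*} [DecidableEq V] (l : List V) (p : (V → V → ℤ) × (V → V → ℤ)) :
    (V → V → ℤ) × (V → V → ℤ) :=
  l.foldl (fun q k => mutE k q) p

/-- The framed quiver of `B`: frozen block is the identity. -/
def framed {V : Type*} [DecidableEq V] (B : V → V → ℤ) : (V → V → ℤ) × (V → V → ℤ) :=
  (B, fun i j => if i = j then 1 else 0)

/-- A mutable vertex is green if its frozen row has a positive entry. -/
def IsGreen {V : Type*} (p : (V → V → ℤ) × (V → V → ℤ)) (i : V) : Prop :=
  ∃ j, 0 < p.2 i j

/-- A mutable vertex is red if its frozen row has a negative entry. -/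
def IsRed {V : Type*} (p : (V → V → ℤ) × (V → V → ℤ)) (i : V) : Prop :=
  ∃ j, p.2 i j < 0

/-- A green sequence: each mutation occurs at a currently green vertex. -/
def IsGreenSeq {V : Type*} [DecidableEq V] (p : (V → V → ℤ) × (V → V → ℤ)) : List V → Prop
  | [] => True
  | k :: l => IsGreen p k ∧ IsGreenSeq (mutE k p) l

/-- Number of red vertices of an extended matrix. -/
noncomputable def redCount {V : Type*} (p : (V → V → ℤ) × (V → V → ℤ)) : ℕ :=
  Nat.card {i : V // IsRed p i}

/-- The red size `Red(Q)`: max number of red vertices attainable by a green sequence. -/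
noncomputable def RedNum {V : Type*} [DecidableEq V] (B : V → V → ℤ) : ℕ :=
  sSup {m : ℕ | ∃ l : List V, IsGreenSeq (framed B) l ∧ redCount (applyE l (framed B)) = m}

/-- The unrestricted red size `uRed(Q)`. -/
noncomputable def uRedNum {V : Type*} [DecidableEq V] (B : V → V → ℤ) : ℕ :=
  sSup {m : ℕ | ∃ l : List V, redCount (applyE l (framed B)) = m}

/-- `Q` admits a maximal green sequence. -/
def AdmitsMGS {V : Type*} [DecidableEq V] (B : V → V → ℤ) : Prop :=
  ∃ l : List V, IsGreenSeq (framed B) l ∧ ∀ i, IsRed (applyE l (framed B)) i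

/-- `Q` admits a reddening sequence. -/
def AdmitsReddening {V : Type*} [DecidableEq V] (B : V → V → ℤ) : Prop :=
  ∃ l : List V, ∀ i, IsRed (applyE l (framed B)) i

/-- Skew-symmetry. -/
def IsSkew {V : Type*} (B : V → V → ℤ) : Prop := ∀ i j, B i j = - B j i

/-- Connectedness of the underlying graph of a quiver. -/
def QConnected {V : Type*} (B : V → V → ℤ) : Prop :=
  (SimpleGraph.fromRel (fun i j => B i j ≠ 0)).Connected

/-! Mutating at a vertex of one component leaves the other component and all of its frozen
arrows untouched. So after any mutation sequence the framed quiver of `Q` is the block sum of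
the framed quivers of `Q₁` and `Q₂`, each mutated along its part of the sequence. Since neither
part is reddening, each block keeps a vertex that is not red, and these two vertices are distinct. -/

section DisjointUnion

variable {V₁ V₂ : Type*}

def blockDiag (A₁ : V₁ → V₁ → ℤ) (A₂ : V₂ → V₂ → ℤ) : (V₁ ⊕ V₂) → (V₁ ⊕ V₂) → ℤ :=
  Sum.elim (fun i => Sum.elim (A₁ i) 0) (fun i => Sum.elim 0 (A₂ i))

def extSum (p₁ : (V₁ → V₁ → ℤ) × (V₁ → V₁ → ℤ)) (p₂ : (V₂ → V₂ → ℤ) × (V₂ → V₂ → ℤ)) :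
    ((V₁ ⊕ V₂) → (V₁ ⊕ V₂) → ℤ) × ((V₁ ⊕ V₂) → (V₁ ⊕ V₂) → ℤ) :=
  (blockDiag p₁.1 p₂.1, blockDiag p₁.2 p₂.2)

theorem isRed_extSum_inl {p₁ : (V₁ → V₁ → ℤ) × (V₁ → V₁ → ℤ)}
    {p₂ : (V₂ → V₂ → ℤ) × (V₂ → V₂ → ℤ)} {i : V₁} :
    IsRed (extSum p₁ p₂) (Sum.inl i) ↔ IsRed p₁ i := by
  constructor
  · rintro ⟨j | j, h⟩
    · exact ⟨j, h⟩
    · simp [extSum, blockDiag] at h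
  · rintro ⟨j, h⟩
    exact ⟨Sum.inl j, h⟩

theorem isRed_extSum_inr {p₁ : (V₁ → V₁ → ℤ) × (V₁ → V₁ → ℤ)}
    {p₂ : (V₂ → V₂ → ℤ) × (V₂ → V₂ → ℤ)} {i : V₂} :
    IsRed (extSum p₁ p₂) (Sum.inr i) ↔ IsRed p₂ i := by
  constructor
  · rintro ⟨j | j, h⟩
    · simp [extSum, blockDiag] at h
    · exact ⟨j, h⟩
  · rintro ⟨j, h⟩
    exact ⟨Sum.inr j, h⟩

variable [DecidableEq V₁] [DecidableEq V₂]

theorem mutE_inl_extSum (k : V₁) (p₁ : (V₁ → V₁ → ℤ) × (V₁ → V₁ → ℤ))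
    (p₂ : (V₂ → V₂ → ℤ) × (V₂ → V₂ → ℤ)) :
    mutE (Sum.inl k) (extSum p₁ p₂) = extSum (mutE k p₁) p₂ := by
  ext (i | i) (j | j) <;> simp [extSum, blockDiag, mutE, mutB, mutC]

theorem mutE_inr_extSum (k : V₂) (p₁ : (V₁ → V₁ → ℤ) × (V₁ → V₁ → ℤ))
    (p₂ : (V₂ → V₂ → ℤ) × (V₂ → V₂ → ℤ)) :
    mutE (Sum.inr k) (extSum p₁ p₂) = extSum p₁ (mutE k p₂) := by
  ext (i | i) (j | j) <;> simp [extSum, blockDiag, mutE, mutB, mutC]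

theorem applyE_extSum (l : List (V₁ ⊕ V₂)) (p₁ : (V₁ → V₁ → ℤ) × (V₁ → V₁ → ℤ))
    (p₂ : (V₂ → V₂ → ℤ) × (V₂ → V₂ → ℤ)) :
    applyE l (extSum p₁ p₂) =
      extSum (applyE (l.filterMap Sum.getLeft?) p₁) (applyE (l.filterMap Sum.getRight?) p₂) := by
  induction l generalizing p₁ p₂ with
  | nil => rfl
  | cons k l ih =>
    cases k with
    | inl k => simpa [applyE, List.filterMap_cons, mutE_inl_extSum] using ih (mutE k p₁) p₂
    | inr k => simpa [applyE, List.filterMap_cons, mutE_inr_extSum] using ih p₁ (mutE k p₂)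

theorem framed_eq_extSum (B : (V₁ ⊕ V₂) → (V₁ ⊕ V₂) → ℤ)
    (hdisj₁ : ∀ (i : V₁) (j : V₂), B (Sum.inl i) (Sum.inr j) = 0)
    (hdisj₂ : ∀ (i : V₂) (j : V₁), B (Sum.inr i) (Sum.inl j) = 0) :
    framed B = extSum (framed fun i j => B (Sum.inl i) (Sum.inl j))
      (framed fun i j => B (Sum.inr i) (Sum.inr j)) := by
  ext (i | i) (j | j) <;> simp [extSum, blockDiag, framed, hdisj₁, hdisj₂]

end DisjointUnion

section RedSize

variable {V : Type*}

theorem redCount_le_card_sub_two [Fintype V] {p : (V → V → ℤ) × (V → V → ℤ)} {a b : V}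
    (hab : a ≠ b) (ha : ¬ IsRed p a) (hb : ¬ IsRed p b) :
    redCount p ≤ Fintype.card V - 2 := by
  classical
  have hsub : {i | IsRed p i} ⊆ ({a, b} : Set V)ᶜ := by
    rintro i hi (rfl | rfl : i = a ∨ i = b)
    exacts [ha hi, hb hi]
  have hpair : ({a, b} : Set V).ncard = 2 := Set.ncard_pair hab
  have hsplit := Set.ncard_add_ncard_compl ({a, b} : Set V)
  rw [Nat.card_eq_fintype_card] at hsplit
  calc redCount p = {i | IsRed p i}.ncard := rfl
    _ ≤ ({a, b} : Set V)ᶜ.ncard := Set.ncard_le_ncard hsub (Set.toFinite _)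
    _ = Fintype.card V - 2 := by omega

variable [DecidableEq V]

theorem uRedNum_le {B : V → V → ℤ} {n : ℕ} (h : ∀ l, redCount (applyE l (framed B)) ≤ n) :
    uRedNum B ≤ n :=
  csSup_le ⟨_, [], rfl⟩ fun _ ⟨l, hl⟩ => hl ▸ h l

theorem redNum_le_uRedNum [Finite V] (B : V → V → ℤ) : RedNum B ≤ uRedNum B := by
  refine csSup_le_csSup ⟨Nat.card V, ?_⟩ ⟨_, [], trivial, rfl⟩ fun _ ⟨l, _, hl⟩ => ⟨l, hl⟩
  rintro _ ⟨l, rfl⟩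
  exact Finite.card_subtype_le _

end RedSize

theorem uRed_disjoint_union_general {V₁ V₂ : Type*} [Fintype V₁] [DecidableEq V₁]
    [Fintype V₂] [DecidableEq V₂] (B : (V₁ ⊕ V₂) → (V₁ ⊕ V₂) → ℤ)
    (hdisj₁ : ∀ (i : V₁) (j : V₂), B (Sum.inl i) (Sum.inr j) = 0)
    (hdisj₂ : ∀ (i : V₂) (j : V₁), B (Sum.inr i) (Sum.inl j) = 0)
    (h₁ : ¬ AdmitsReddening (fun i j : V₁ => B (Sum.inl i) (Sum.inl j)))
    (h₂ : ¬ AdmitsReddening (fun i j : V₂ => B (Sum.inr i) (Sum.inr j))) :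
    uRedNum B ≤ Fintype.card (V₁ ⊕ V₂) - 2 ∧
    RedNum B ≤ Fintype.card (V₁ ⊕ V₂) - 2 := by
  have hu : uRedNum B ≤ Fintype.card (V₁ ⊕ V₂) - 2 := by
    refine uRedNum_le fun l => ?_
    obtain ⟨i₁, hi₁⟩ := not_forall.1 (not_exists.1 h₁ (l.filterMap Sum.getLeft?))
    obtain ⟨i₂, hi₂⟩ := not_forall.1 (not_exists.1 h₂ (l.filterMap Sum.getRight?))
    rw [framed_eq_extSum B hdisj₁ hdisj₂, applyE_extSum]
    exact redCount_le_card_sub_two Sum.inl_ne_inr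
      (isRed_extSum_inl.not.2 hi₁) (isRed_extSum_inr.not.2 hi₂)
  exact ⟨hu, (redNum_le_uRedNum B).trans hu⟩

/-- a disjoint union of two quivers neither of which admits a reddening
sequence has `uRed(Q) ≤ |V(Q)| - 2` (hence also `Red(Q) ≤ |V(Q)| - 2`). -/
theorem uRed_disjoint_union {V₁ V₂ : Type*} [Fintype V₁] [DecidableEq V₁]
    [Fintype V₂] [DecidableEq V₂] (B : (V₁ ⊕ V₂) → (V₁ ⊕ V₂) → ℤ) (hB : IsSkew B)
    (hdisj₁ : ∀ (i : V₁) (j : V₂), B (Sum.inl i) (Sum.inr j) = 0)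
    (hdisj₂ : ∀ (i : V₂) (j : V₁), B (Sum.inr i) (Sum.inl j) = 0)
    (h₁ : ¬ AdmitsReddening (fun i j : V₁ => B (Sum.inl i) (Sum.inl j)))
    (h₂ : ¬ AdmitsReddening (fun i j : V₂ => B (Sum.inr i) (Sum.inr j))) :
    uRedNum B ≤ Fintype.card (V₁ ⊕ V₂) - 2 ∧
    RedNum B ≤ Fintype.card (V₁ ⊕ V₂) - 2 :=
  uRed_disjoint_union_general B hdisj₁ hdisj₂ h₁ h₂
end

section
/- Every acyclic quiver Q admits a maximal green sequence: mutating the framed quiver at the vertices of Q in any linear order compatible with the arrows (sources first) is a maximal green sequence. Consequently Red(Q) = |V(Q)| for acyclic Q. -/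
section MGSAux

variable {n : ℕ}

/-- Sign of vertex `i` at stage `m`: `-1` if already mutated (`σ i < m`), else `1`. -/
def mgsSgn (σ : Equiv.Perm (Fin n)) (m : ℕ) (i : Fin n) : ℤ :=
  if (σ i : ℕ) < m then -1 else 1

/-- Exchange matrix at stage `m`. -/
def mgsB (B : Fin n → Fin n → ℤ) (σ : Equiv.Perm (Fin n)) (m : ℕ) : Fin n → Fin n → ℤ :=
  fun i j => mgsSgn σ m i * mgsSgn σ m j * B i j

/-- Frozen block at stage `m`. -/
def mgsC (σ : Equiv.Perm (Fin n)) (m : ℕ) : Fin n → Fin n → ℤ :=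
  fun i j => mgsSgn σ m i * (if i = j then 1 else 0)

lemma mgsSgn_zero (σ : Equiv.Perm (Fin n)) (i : Fin n) : mgsSgn σ 0 i = 1 := by
  simp [mgsSgn]

lemma framed_eq (B : Fin n → Fin n → ℤ) (σ : Equiv.Perm (Fin n)) :
    framed B = (mgsB B σ 0, mgsC σ 0) := by
  unfold framed mgsB mgsC
  refine Prod.ext ?_ ?_ <;> funext i j <;> simp [mgsSgn_zero]

lemma step_eq (B : Fin n → Fin n → ℤ) (hB : IsSkew B) (σ : Equiv.Perm (Fin n))
    (hacyc : ∀ i j, 0 < B i j → σ i < σ j) (m : ℕ) (hm : m < n) :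
    mutE (σ.symm ⟨m, hm⟩) (mgsB B σ m, mgsC σ m) = (mgsB B σ (m + 1), mgsC σ (m + 1)) := by
  set v : Fin n := σ.symm ⟨m, hm⟩ with hv
  have hσv : (σ v : ℕ) = m := by simp [hv]
  have hsgn_eq : ∀ i : Fin n, i ≠ v → mgsSgn σ (m + 1) i = mgsSgn σ m i := by
    intro i hi
    have : (σ i : ℕ) ≠ m := by
      intro h
      exact hi (by simpa using congrArg σ.symm (Fin.ext (h.trans hσv.symm) : σ i = σ v))
    unfold mgsSgn
    rcases lt_or_ge ((σ i : ℕ)) m with h | h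
    · simp [h, Nat.lt_succ_of_lt h]
    · have h1 : ¬ (σ i : ℕ) < m := not_lt.2 h
      have h2 : ¬ (σ i : ℕ) < m + 1 := by omega
      simp [h1, h2]
  have hsgn_v : mgsSgn σ m v = 1 := by simp [mgsSgn, hσv]
  have hsgn_v' : mgsSgn σ (m + 1) v = -1 := by simp [mgsSgn, hσv]
  have hBvv : B v v = 0 := by have := hB v v; omega
  have hrow : ∀ j : Fin n, 0 ≤ mgsB B σ m v j := by
    intro j
    by_cases hj : j = v
    · rw [hj]; simp [mgsB, hBvv]
    · unfold mgsB
      rw [hsgn_v, one_mul]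
      unfold mgsSgn
      rcases lt_or_ge ((σ j : ℕ)) m with h | h
      · have : B v j ≤ 0 := by
          by_contra hpos
          have := hacyc v j (by omega)
          rw [Fin.lt_def, hσv] at this
          omega
        rw [if_pos h]
        omega
      · have : 0 ≤ B v j := by
          by_contra hneg
          have hpos : 0 < B j v := by have := hB v j; omega
          have := hacyc j v hpos
          rw [Fin.lt_def, hσv] at this
          omega
        rw [if_neg (not_lt.2 h)]
        omega
  have hcol : ∀ i : Fin n, mgsB B σ m i v ≤ 0 := by
    intro i
    have h1 : mgsB B σ m i v = - mgsB B σ m v i := by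
      unfold mgsB
      rw [hB i v]; ring
    rw [h1]
    have := hrow i
    omega
  unfold mutE
  refine Prod.ext ?_ ?_
  · funext i j
    show mutB v (mgsB B σ m) i j = mgsB B σ (m + 1) i j
    unfold mutB
    by_cases hi : i = v
    · rw [if_pos (Or.inl hi)]
      by_cases hj : j = v
      · rw [hi, hj]
        simp [mgsB, hBvv]
      · rw [hi]
        unfold mgsB
        rw [hsgn_eq j hj, hsgn_v, hsgn_v']
        ring
    · by_cases hj : j = v
      · rw [if_pos (Or.inr hj), hj]
        unfold mgsB
        rw [hsgn_eq i hi, hsgn_v, hsgn_v']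
        ring
      · rw [if_neg (by tauto)]
        have h1 : max (mgsB B σ m i v) 0 = 0 := by have := hcol i; omega
        have h2 : max (-(mgsB B σ m v j)) 0 = 0 := by have := hrow j; omega
        rw [h1, h2]
        unfold mgsB
        rw [hsgn_eq i hi, hsgn_eq j hj]
        ring
  · funext i j
    show mutC v (mgsB B σ m) (mgsC σ m) i j = mgsC σ (m + 1) i j
    unfold mutC
    by_cases hi : i = v
    · rw [if_pos hi, hi]
      unfold mgsC
      rw [hsgn_v, hsgn_v']
      ring
    · rw [if_neg hi]
      have h1 : max (mgsB B σ m i v) 0 = 0 := by have := hcol i; omega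
      have h2 : max (-(mgsC σ m v j)) 0 = 0 := by
        have : 0 ≤ mgsC σ m v j := by
          unfold mgsC; rw [hsgn_v]; split <;> omega
        omega
      rw [h1, h2]
      unfold mgsC
      rw [hsgn_eq i hi]
      ring

lemma drop_finRange (m : ℕ) (hm : m < n) :
    (List.finRange n).drop m = ⟨m, hm⟩ :: (List.finRange n).drop (m + 1) := by
  have hlen : m < (List.finRange n).length := by simpa using hm
  rw [List.drop_eq_getElem_cons hlen]
  congr 1
  simp

lemma mgs_aux (B : Fin n → Fin n → ℤ) (hB : IsSkew B) (σ : Equiv.Perm (Fin n))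
    (hacyc : ∀ i j, 0 < B i j → σ i < σ j) :
    ∀ d m, m + d = n →
      IsGreenSeq (mgsB B σ m, mgsC σ m) (((List.finRange n).drop m).map σ.symm) ∧
      applyE (((List.finRange n).drop m).map σ.symm) (mgsB B σ m, mgsC σ m)
        = (mgsB B σ n, mgsC σ n) := by
  intro d
  induction d with
  | zero =>
    intro m hm
    subst hm
    simp only [Nat.add_zero]
    rw [List.drop_of_length_le (by simp)]
    exact ⟨trivial, rfl⟩
  | succ d ih =>
    intro m hm
    have hmn : m < n := by omega
    rw [drop_finRange m hmn, List.map_cons]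
    set v : Fin n := σ.symm ⟨m, hmn⟩ with hv
    have hσv : (σ v : ℕ) = m := by simp [hv]
    have hstep := step_eq B hB σ hacyc m hmn
    have hih := ih (m + 1) (by omega)
    constructor
    · refine ⟨⟨v, ?_⟩, ?_⟩
      · show 0 < mgsC σ m v v
        unfold mgsC mgsSgn
        simp [hσv]
      · rw [hstep]
        exact hih.1
    · show applyE (((List.finRange n).drop (m+1)).map σ.symm) (mutE v (mgsB B σ m, mgsC σ m))
          = _
      rw [hstep]
      exact hih.2

end MGSAux

/-- any acyclic quiver admits a maximal green sequence, obtained by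
mutating along any linear order compatible with the arrows (sources first); hence
`Red(Q) = |V(Q)|`. -/
theorem acyclic_mgs {n : ℕ} (B : Fin n → Fin n → ℤ) (hB : IsSkew B)
    (σ : Equiv.Perm (Fin n)) (hacyc : ∀ i j, 0 < B i j → σ i < σ j) :
    IsGreenSeq (framed B) ((List.finRange n).map σ.symm) ∧
    (∀ i, IsRed (applyE ((List.finRange n).map σ.symm) (framed B)) i) ∧
    RedNum B = n := by
  obtain ⟨hgs, happ⟩ := mgs_aux B hB σ hacyc n 0 (by omega)
  rw [List.drop_zero] at hgs happ
  have hfr := framed_eq B σ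
  have hred : ∀ i, IsRed (mgsB B σ n, mgsC σ n) i := by
    intro i
    refine ⟨i, ?_⟩
    show mgsC σ n i i < 0
    unfold mgsC mgsSgn
    simp [(σ i).isLt]
  have hgs' : IsGreenSeq (framed B) ((List.finRange n).map σ.symm) := by
    rw [hfr]; exact hgs
  have hredfin : ∀ i, IsRed (applyE ((List.finRange n).map σ.symm) (framed B)) i := by
    intro i
    rw [hfr, happ]
    exact hred i
  refine ⟨hgs', hredfin, ?_⟩
  have hcount : redCount (applyE ((List.finRange n).map σ.symm) (framed B)) = n := by
    rw [hfr, happ]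
    unfold redCount
    rw [Nat.card_congr (Equiv.subtypeUnivEquiv hred)]
    simp
  have hmem : n ∈ {m : ℕ | ∃ l : List (Fin n),
      IsGreenSeq (framed B) l ∧ redCount (applyE l (framed B)) = m} :=
    ⟨_, hgs', hcount⟩
  have hle : ∀ m ∈ {m : ℕ | ∃ l : List (Fin n),
      IsGreenSeq (framed B) l ∧ redCount (applyE l (framed B)) = m}, m ≤ n := by
    rintro m ⟨l, -, rfl⟩
    unfold redCount
    calc Nat.card {i : Fin n // IsRed (applyE l (framed B)) i}
        ≤ Nat.card (Fin n) := Nat.card_le_card_of_injective _ Subtype.val_injective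
      _ = n := by simp
  exact le_antisymm (csSup_le ⟨n, hmem⟩ hle) (le_csSup ⟨n, hle⟩ hmem)
end

section
/- For the X₇ quiver, the mutation sequence (2,4,6,3,5,7) applied to the framed quiver is a green sequence after which exactly the six vertices 2,3,4,5,6,7 are red and vertex 1 is green. Hence Red(X₇) ≥ 6. -/
/-- The `X₇` quiver: arrows 1→2, 3→1, 2⇒3, 1→4, 5→1, 4⇒5, 1→6, 7→1, 6⇒7. -/
def X7B : Fin 7 → Fin 7 → ℤ := fun i j =>
  (!![0, 1, -1, 1, -1, 1, -1;
      -1, 0, 2, 0, 0, 0, 0;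
      1, -2, 0, 0, 0, 0, 0;
      -1, 0, 0, 0, 2, 0, 0;
      1, 0, 0, -2, 0, 0, 0;
      -1, 0, 0, 0, 0, 0, 2;
      1, 0, 0, 0, 0, -2, 0] : Matrix (Fin 7) (Fin 7) ℤ) i j


instance {V : Type*} [Fintype V] (p : (V → V → ℤ) × (V → V → ℤ)) (i : V) :
    Decidable (IsGreen p i) :=
  decidable_of_iff (∃ j, 0 < p.2 i j) Iff.rfl

instance {V : Type*} [Fintype V] (p : (V → V → ℤ) × (V → V → ℤ)) (i : V) :
    Decidable (IsRed p i) :=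
  decidable_of_iff (∃ j, p.2 i j < 0) Iff.rfl

/-- `(2,4,6,3,5,7)` is a green sequence for `X₇` turning exactly
`2,…,7` red, with vertex `1` remaining green; hence `Red(X₇) ≥ 6`. -/
theorem X7_general_mgs_one :
    IsGreenSeq (framed X7B) [1, 3, 5, 2, 4, 6] ∧
    (∀ i : Fin 7, i ≠ 0 → IsRed (applyE [1, 3, 5, 2, 4, 6] (framed X7B)) i) ∧
    ¬ IsRed (applyE [1, 3, 5, 2, 4, 6] (framed X7B)) 0 ∧
    IsGreen (applyE [1, 3, 5, 2, 4, 6] (framed X7B)) 0 ∧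
    6 ≤ RedNum X7B := by
  have hseq : IsGreenSeq (framed X7B) [1, 3, 5, 2, 4, 6] := by
    simp only [IsGreenSeq]
    refine ⟨?_, ?_, ?_, ?_, ?_, ?_, trivial⟩ <;> decide
  have hred : ∀ i : Fin 7, i ≠ 0 → IsRed (applyE [1, 3, 5, 2, 4, 6] (framed X7B)) i := by
    decide
  have hnred : ¬ IsRed (applyE [1, 3, 5, 2, 4, 6] (framed X7B)) 0 := by decide
  have hgrn : IsGreen (applyE [1, 3, 5, 2, 4, 6] (framed X7B)) 0 := by decide
  refine ⟨hseq, hred, hnred, hgrn, ?_⟩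
  have hcount : redCount (applyE [1, 3, 5, 2, 4, 6] (framed X7B)) = 6 := by
    rw [redCount, Nat.card_eq_fintype_card]
    decide
  refine le_csSup ⟨7, ?_⟩ ⟨[1, 3, 5, 2, 4, 6], hseq, hcount⟩
  rintro m ⟨l, -, rfl⟩
  calc redCount (applyE l (framed X7B)) ≤ Nat.card (Fin 7) :=
        Nat.card_le_card_of_injective Subtype.val Subtype.val_injective
    _ = 7 := by simp
end

section
/- For the quiver Q which is the triangular extension of two Markov quivers connected by a single arrow 1 → 4 (vertices 1,…,6; double arrows 1⇒2, 2⇒3, 3⇒1 and 4⇒5, 5⇒6, 6⇒4; single arrow 1→4), the mutation sequence (3,4,1,2,4,6,5) applied to the framed quiver is a green sequence after which exactly five vertices are red and the unique remaining green vertex is vertex 1. Hence Red(Q) ≥ 5. -/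
/-- Triangular extension of two Markov quivers joined by the arrow 1→4. -/
def TwoMarkovB : Fin 6 → Fin 6 → ℤ := fun i j =>
  (!![0, 2, -2, 1, 0, 0;
      -2, 0, 2, 0, 0, 0;
      2, -2, 0, 0, 0, 0;
      -1, 0, 0, 0, 2, -2;
      0, 0, 0, -2, 0, 2;
      0, 0, 0, 2, -2, 0] : Matrix (Fin 6) (Fin 6) ℤ) i j

instance inst_s12 {V : Type*} [Fintype V] (p : (V → V → ℤ) × (V → V → ℤ)) (i : V) :
    Decidable (IsGreen p i) := Fintype.decidableExistsFintype

instance inst_s12_2 {V : Type*} [Fintype V] (p : (V → V → ℤ) × (V → V → ℤ)) (i : V) :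
    Decidable (IsRed p i) := Fintype.decidableExistsFintype

/-- `(3,4,1,2,4,6,5)` is a green sequence for the triangular
extension of two Markov quivers after which exactly five vertices are red, the
unique green vertex being `1`; hence `Red(Q) ≥ 5`. -/
theorem twoMarkov_general_mgs :
    IsGreenSeq (framed TwoMarkovB) [2, 3, 0, 1, 3, 5, 4] ∧
    (∀ i : Fin 6, i ≠ 0 → IsRed (applyE [2, 3, 0, 1, 3, 5, 4] (framed TwoMarkovB)) i) ∧
    ¬ IsRed (applyE [2, 3, 0, 1, 3, 5, 4] (framed TwoMarkovB)) 0 ∧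
    IsGreen (applyE [2, 3, 0, 1, 3, 5, 4] (framed TwoMarkovB)) 0 ∧
    5 ≤ RedNum TwoMarkovB := by
  refine ⟨?_, by decide, by decide, by decide, ?_⟩
  · simp only [IsGreenSeq]
    exact ⟨by decide, by decide, by decide, by decide, by decide, by decide, by decide, trivial⟩
  · have h5 : (5:ℕ) ∈ {m : ℕ | ∃ l : List (Fin 6), IsGreenSeq (framed TwoMarkovB) l ∧
        redCount (applyE l (framed TwoMarkovB)) = m} := by
      refine ⟨[2, 3, 0, 1, 3, 5, 4], ?_, ?_⟩
      · simp only [IsGreenSeq]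
        exact ⟨by decide, by decide, by decide, by decide, by decide, by decide, by decide, trivial⟩
      · rw [redCount, Nat.card_eq_fintype_card]
        decide
    refine le_csSup ⟨6, ?_⟩ h5
    rintro m ⟨l, -, rfl⟩
    calc redCount (applyE l (framed TwoMarkovB))
        ≤ Nat.card (Fin 6) := Nat.card_le_card_of_injective _ Subtype.val_injective
      _ = 6 := by simp
end

section
/- If Q is a connected quiver on at most 4 vertices, then Red(Q) ≥ |V(Q)| - 1. -/
/-!
Order the vertices of an acyclic quiver so that every arrow points forward; mutating at them in
this order is a green sequence (each vertex is a source of the part not yet mutated, so the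
mutation only turns its own frozen row from `e_k` into `-e_k`) that makes all of them red.
A quiver on at most four vertices has an acyclic induced subquiver on all but one vertex:
choosing for each pair of vertices a direction with `0 ≤ B a b` gives a tournament, and a
tournament on four vertices contains a transitive triple.
-/

theorem exists_pairwise_triple_of_total {α : Type*} [Fintype α] {R : α → α → Prop} (hR : ∀ a b, R a b ∨ R b a)
    (hα : 3 < Fintype.card α) :
    ∃ l : List α, l.Nodup ∧ l.length = 3 ∧ l.Pairwise R := by
  classical
  obtain ⟨v⟩ : Nonempty α := Fintype.card_pos_iff.mp (by omega)
  -- Two of the other (at least three) vertices lie on the same side of `v`.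
  obtain ⟨x, hx, y, hy, hxy, hside⟩ :=
    Finset.exists_ne_map_eq_of_card_lt_of_maps_to (s := Finset.univ.erase v)
      (t := Finset.univ) (f := fun b => decide (R v b))
      (by rw [Finset.card_univ, Fintype.card_bool, Finset.card_erase_of_mem (Finset.mem_univ v),
        Finset.card_univ]; omega) (fun _ _ => Finset.mem_univ _)
  have hxv : x ≠ v := Finset.ne_of_mem_erase hx
  have hyv : y ≠ v := Finset.ne_of_mem_erase hy
  by_cases hvx : R v x
  · have hvy : R v y := by simpa [hvx] using hside.symm
    rcases hR x y with h | h
    · exact ⟨[v, x, y], by simp [*, hxv.symm, hyv.symm], rfl, by simp [*]⟩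
    · exact ⟨[v, y, x], by simp [*, hxv.symm, hyv.symm, hxy.symm], rfl, by simp [*]⟩
  · have hvy : ¬R v y := by simpa [hvx] using hside.symm
    have hxv' : R x v := (hR v x).resolve_left hvx
    have hyv' : R y v := (hR v y).resolve_left hvy
    rcases hR x y with h | h
    · exact ⟨[x, y, v], by simp [*], rfl, by simp [*]⟩
    · exact ⟨[y, x, v], by simp [*, hxy.symm], rfl, by simp [*]⟩

theorem exists_pairwise_card_sub_one_of_total {n : ℕ} {R : Fin n → Fin n → Prop}
    (hR : ∀ a b, R a b ∨ R b a) (hn : n ≤ 4) :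
    ∃ l : List (Fin n), l.Nodup ∧ l.length = n - 1 ∧ l.Pairwise R := by
  interval_cases n
  · exact ⟨[], by simp, rfl, by simp⟩
  · exact ⟨[], by simp, rfl, by simp⟩
  · exact ⟨[0], by simp, rfl, by simp⟩
  · rcases hR 0 1 with h | h
    · exact ⟨[0, 1], by decide, rfl, by simpa using h⟩
    · exact ⟨[1, 0], by decide, rfl, by simpa using h⟩
  · exact exists_pairwise_triple_of_total hR (by simp)

theorem IsSkew.nonneg_or_nonneg {V : Type*} {B : V → V → ℤ} (hB : IsSkew B) (a b : V) :
    0 ≤ B a b ∨ 0 ≤ B b a := by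
  have := hB a b
  omega

section Mutation

variable {V : Type*} [DecidableEq V] {B C : V → V → ℤ}

theorem isSkew_mutB (k : V) (hB : IsSkew B) : IsSkew (mutB k B) := by
  intro i j
  by_cases h : i = k ∨ j = k
  · rw [mutB, mutB, if_pos h, if_pos h.symm, hB i j]
  · rw [mutB, mutB, if_neg h, if_neg fun h' => h h'.symm, hB i j, hB i k, hB k j]
    simp only [neg_neg]
    ring

theorem mutB_eq_of_nonpos_of_nonneg {i j k : V} (hi : i ≠ k) (hj : j ≠ k) (hik : B i k ≤ 0)
    (hkj : 0 ≤ B k j) : mutB k B i j = B i j := by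
  have hneg : -B k j ≤ 0 := by omega
  simp [mutB, hi, hj, max_eq_right hik, max_eq_right hneg]

theorem mutC_eq_of_nonpos {i k : V} (hi : i ≠ k) (hik : B i k ≤ 0) (hk : ∀ j, 0 ≤ C k j) :
    mutC k B C i = C i := by
  funext j
  have hneg : -C k j ≤ 0 := by linarith [hk j]
  simp [mutC, hi, max_eq_right hik, max_eq_right hneg]

theorem isGreenSeq_of_pairwise_nonneg (l : List V) (D : Set V) (hB : IsSkew B) (hl : l.Nodup)
    (hpair : l.Pairwise fun a b => 0 ≤ B a b)
    (hCl : ∀ b ∈ l, ∀ j, C b j = if b = j then 1 else 0)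
    (hD : ∀ a ∈ D, IsRed (B, C) a) (hDl : ∀ a ∈ D, ∀ b ∈ l, B a b ≤ 0) :
    IsGreenSeq (B, C) l ∧ ∀ a, a ∈ D ∨ a ∈ l → IsRed (applyE l (B, C)) a := by
  induction l generalizing B C D with
  | nil => exact ⟨trivial, fun a ha => hD a (by simpa using ha)⟩
  | cons k rest ih =>
    obtain ⟨hk_rest, hrest⟩ := List.nodup_cons.mp hl
    obtain ⟨hk_pair, hrest_pair⟩ := List.pairwise_cons.mp hpair
    have hCk : ∀ j, C k j = if k = j then 1 else 0 := hCl k List.mem_cons_self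
    have hCk_nonneg : ∀ j, 0 ≤ C k j := fun j => by rw [hCk]; split_ifs <;> simp
    have hne_of_mem : ∀ b ∈ rest, b ≠ k := fun b hb h => hk_rest (h ▸ hb)
    have hrest_k : ∀ b ∈ rest, B b k ≤ 0 := fun b hb => by linarith [hB b k, hk_pair b hb]
    have hne_of_red : ∀ a ∈ D, a ≠ k := by
      rintro a ha rfl
      obtain ⟨j, hj⟩ := hD a ha
      exact absurd (hCk_nonneg j) (not_le.mpr hj)
    have hD_k : ∀ a ∈ D, B a k ≤ 0 := fun a ha => hDl a ha k List.mem_cons_self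
    have step := ih (B := mutB k B) (C := mutC k B C) (D := insert k D) (isSkew_mutB k hB)
      hrest ?pair ?rows ?red ?arrows
    case pair =>
      refine hrest_pair.imp_of_mem fun {b c} hb hc hbc => ?_
      rwa [mutB_eq_of_nonpos_of_nonneg (hne_of_mem b hb) (hne_of_mem c hc) (hrest_k b hb)
        (hk_pair c hc)]
    case rows =>
      intro b hb
      rw [mutC_eq_of_nonpos (hne_of_mem b hb) (hrest_k b hb) hCk_nonneg]
      exact hCl b (List.mem_cons_of_mem k hb)
    case red =>
      rintro a (rfl | ha)
      · exact ⟨a, by simp [mutC, hCk]⟩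
      · obtain ⟨j, hj⟩ := hD a ha
        exact ⟨j, by simpa [mutC_eq_of_nonpos (hne_of_red a ha) (hD_k a ha) hCk_nonneg] using hj⟩
    case arrows =>
      rintro a (rfl | ha) b hb
      · simpa [mutB] using hk_pair b hb
      · rw [mutB_eq_of_nonpos_of_nonneg (hne_of_red a ha) (hne_of_mem b hb) (hD_k a ha)
          (hk_pair b hb)]
        exact hDl a ha b (List.mem_cons_of_mem k hb)
    refine ⟨⟨⟨k, by simp [hCk]⟩, step.1⟩, fun a ha => step.2 a ?_⟩
    simp only [List.mem_cons, Set.mem_insert_iff] at ha ⊢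
    tauto

theorem isGreenSeq_framed_of_pairwise_nonneg {l : List V} (hB : IsSkew B) (hl : l.Nodup)
    (hpair : l.Pairwise fun a b => 0 ≤ B a b) :
    IsGreenSeq (framed B) l ∧ ∀ a ∈ l, IsRed (applyE l (framed B)) a := by
  have h := isGreenSeq_of_pairwise_nonneg l ∅ hB hl hpair (fun _ _ _ => rfl) (by simp) (by simp)
  exact ⟨h.1, fun a ha => h.2 a (Or.inr ha)⟩

theorem redCount_le_redNum [Finite V] {l : List V} (hl : IsGreenSeq (framed B) l) :
    redCount (applyE l (framed B)) ≤ RedNum B := by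
  refine le_csSup ⟨Nat.card V, ?_⟩ ⟨l, hl, rfl⟩
  rintro m ⟨l', -, rfl⟩
  exact Nat.card_le_card_of_injective _ Subtype.val_injective

theorem length_le_redCount [Finite V] {p : (V → V → ℤ) × (V → V → ℤ)} {l : List V}
    (hl : l.Nodup) (hred : ∀ a ∈ l, IsRed p a) : l.length ≤ redCount p := by
  calc l.length = (l.toFinset : Set V).ncard := by
        rw [Set.ncard_coe_finset, List.toFinset_card_of_nodup hl]
    _ ≤ {a | IsRed p a}.ncard := Set.ncard_le_ncard (fun a ha => hred a (by simpa using ha))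
    _ = redCount p := (Nat.card_coe_set_eq _).symm

end Mutation

theorem red_small_quivers_general {n : ℕ} (hn : n ≤ 4) (B : Fin n → Fin n → ℤ)
    (hB : IsSkew B) :
    n - 1 ≤ RedNum B := by
  obtain ⟨l, hl, hlen, hpair⟩ := exists_pairwise_card_sub_one_of_total hB.nonneg_or_nonneg hn
  obtain ⟨hgreen, hred⟩ := isGreenSeq_framed_of_pairwise_nonneg hB hl hpair
  calc n - 1 = l.length := hlen.symm
    _ ≤ redCount (applyE l (framed B)) := length_le_redCount hl hred
    _ ≤ RedNum B := redCount_le_redNum hgreen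

/-- a connected quiver on at most 4 vertices has `Red(Q) ≥ |V(Q)| - 1`. -/
theorem red_small_quivers {n : ℕ} (hn : n ≤ 4) (B : Fin n → Fin n → ℤ)
    (hB : IsSkew B) (hconn : QConnected B) :
    n - 1 ≤ RedNum B :=
  red_small_quivers_general hn B hB
end
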